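/- arXiv:2307.03527 — 3 statements merged into one kernel-verified Lean document; each statement's English description precedes it below -/
import Mathlib

section
/- Let n ≥ 2 be an integer. If C > 0 is a constant such that (∫_{ℝ^n} |f|^{n/(n-1)} dx)^{(n-1)/n} ≤ C ∫_{ℝ^n} |∇f| dx holds for every smooth compactly supported function f : ℝ^n → ℝ, then C ≥ n^{-1} ω_n^{-1/n}. -/
/-!
Test the inequality on the radial cutoffs `u_a x = φ_a ‖x‖`, `a > 1`, where `φ_a` is smooth,
nonincreasing, equal to `1` on `(-∞, 1]` and to `0` on `[a, ∞)`. Since `u_a = 1` on the unit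
ball, the left-hand side is at least `ω_n ^ ((n - 1) / n)`. In polar coordinates
`∫ |∇u_a| = n ω_n ∫ r ^ (n - 1) |φ_a' r| dr ≤ n ω_n a ^ (n - 1)`, because `φ_a` drops by exactly `1`
on `[1, a]`. Letting `a → 1` gives `ω_n ^ ((n - 1) / n) ≤ C n ω_n`.
-/

open Real MeasureTheory Filter Topology

/-- The volume of the unit ball in `ℝ^n`: `ω_n = π^(n/2) / Γ(n/2 + 1)`. -/
noncomputable def ballVol (n : ℕ) : ℝ := Real.pi ^ ((n : ℝ) / 2) / Real.Gamma ((n : ℝ) / 2 + 1)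

open Metric Set Module

theorem fderiv_zero_of_even {E F : Type*} [NormedAddCommGroup E] [NormedSpace ℝ E]
    [NormedAddCommGroup F] [NormedSpace ℝ F] {f : E → F} (hf : ∀ x, f (-x) = f x) :
    fderiv ℝ f 0 = 0 := by
  by_cases hd : DifferentiableAt ℝ f 0
  · have hneg : HasFDerivAt f (-fderiv ℝ f 0) 0 := by
      have hcomp := (neg_zero (G := E) ▸ hd.hasFDerivAt).comp (0 : E) (hasFDerivAt_id (0 : E)).neg
      simpa [Function.comp_def, hf] using hcomp
    have h := hd.hasFDerivAt.unique hneg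
    have h2 : (2 : ℝ) • fderiv ℝ f 0 = 0 := by
      rw [two_smul]; nth_rewrite 2 [h]; exact add_neg_cancel _
    exact (smul_eq_zero.1 h2).resolve_left two_ne_zero
  · exact fderiv_zero_of_not_differentiableAt hd

theorem deriv_eq_zero_of_eqOn_Ici {φ : ℝ → ℝ} {a r : ℝ} (hconst : ∀ s, a ≤ s → φ s = φ a)
    (hr : a < r) : deriv φ r = 0 := by
  have h : φ =ᶠ[𝓝 r] fun _ => φ a :=
    eventually_of_mem (Ioi_mem_nhds hr) fun s hs => hconst s (le_of_lt hs)
  rw [h.deriv_eq, deriv_const]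

section RadialFunction

variable {E : Type*} [NormedAddCommGroup E] [InnerProductSpace ℝ E] {φ : ℝ → ℝ}

theorem contDiff_comp_norm {n : WithTop ℕ∞} (hφ : ContDiff ℝ n φ)
    (h0 : φ =ᶠ[𝓝 0] fun _ => φ 0) : ContDiff ℝ n fun x : E => φ ‖x‖ := by
  refine contDiff_iff_contDiffAt.2 fun x => ?_
  rcases eq_or_ne x 0 with rfl | hx
  · refine (contDiffAt_const (c := φ 0)).congr_of_eventuallyEq ?_
    exact (continuous_norm.tendsto' (0 : E) 0 norm_zero).eventually h0
  · exact hφ.contDiffAt.comp x (contDiffAt_norm ℝ hx)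

theorem norm_fderiv_comp_norm_le (hφ : Differentiable ℝ φ) (x : E) :
    ‖fderiv ℝ (fun y : E => φ ‖y‖) x‖ ≤ |deriv φ ‖x‖| := by
  rcases eq_or_ne x 0 with rfl | hx
  -- The norm is not differentiable at `0`, but `φ ‖·‖` is even.
  · rw [fderiv_zero_of_even fun y => by rw [norm_neg], norm_zero]
    exact abs_nonneg _
  · have hD : HasFDerivAt (fun y : E => φ ‖y‖) (deriv φ ‖x‖ • fderiv ℝ (‖·‖) x) x :=
      (hφ _).hasDerivAt.comp_hasFDerivAt x
        ((contDiffAt_norm ℝ hx (n := 1)).differentiableAt one_ne_zero).hasFDerivAt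
    rw [hD.fderiv, norm_smul, Real.norm_eq_abs]
    refine mul_le_of_le_one_right (abs_nonneg _) ?_
    simpa using norm_fderiv_le_of_lipschitz ℝ (lipschitzWith_one_norm (E := E)) (x₀ := x)

end RadialFunction

theorem integral_Ioi_pow_mul_abs_deriv_le {φ : ℝ → ℝ} (hφ : ContDiff ℝ 1 φ) (hanti : Antitone φ)
    {a : ℝ} (ha : 0 ≤ a) (hconst : ∀ r, a ≤ r → φ r = φ a) (k : ℕ) :
    ∫ r in Ioi 0, r ^ k * |deriv φ r| ≤ a ^ k * (φ 0 - φ a) := by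
  have hderiv : Continuous (deriv φ) := hφ.continuous_deriv le_rfl
  have habs : ∀ r, |deriv φ r| = -deriv φ r := fun r => abs_of_nonpos hanti.deriv_nonpos
  calc ∫ r in Ioi 0, r ^ k * |deriv φ r|
      = ∫ r in (0)..a, r ^ k * |deriv φ r| := by
        rw [intervalIntegral.integral_of_le ha]
        refine setIntegral_eq_of_subset_of_forall_sdiff_eq_zero measurableSet_Ioi
          Ioc_subset_Ioi_self fun r hr => ?_
        have har : a < r := not_le.1 fun h => hr.2 ⟨hr.1, h⟩
        rw [deriv_eq_zero_of_eqOn_Ici hconst har, abs_zero, mul_zero]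
    _ ≤ ∫ r in (0)..a, a ^ k * -deriv φ r := by
        refine intervalIntegral.integral_mono_on ha
          (((continuous_pow k).mul hderiv.abs).intervalIntegrable _ _)
          ((continuous_const.mul hderiv.neg).intervalIntegrable _ _) fun r hr => ?_
        rw [habs]
        exact mul_le_mul_of_nonneg_right (pow_le_pow_left₀ hr.1 hr.2 k)
          (neg_nonneg.2 hanti.deriv_nonpos)
    _ = a ^ k * (φ 0 - φ a) := by
        rw [intervalIntegral.integral_const_mul, intervalIntegral.integral_neg,
          intervalIntegral.integral_deriv_eq_sub (fun r _ => (hφ.differentiable one_ne_zero) r)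
            (hderiv.intervalIntegrable _ _)]
        ring

section HaarMeasure

variable {E : Type*} [NormedAddCommGroup E] [InnerProductSpace ℝ E] [FiniteDimensional ℝ E]
  [Nontrivial E] [MeasurableSpace E] [BorelSpace E] (μ : Measure E) [μ.IsAddHaarMeasure] {φ : ℝ → ℝ}

theorem integral_norm_fderiv_comp_norm_le (hφ : ContDiff ℝ 1 φ) (hanti : Antitone φ) {a : ℝ}
    (ha : 0 ≤ a) (hconst : ∀ r, a ≤ r → φ r = φ a) :
    ∫ x, ‖fderiv ℝ (fun y : E => φ ‖y‖) x‖ ∂μ ≤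
      finrank ℝ E * μ.real (ball 0 1) * a ^ (finrank ℝ E - 1) * (φ 0 - φ a) := by
  have hint : Integrable (fun x : E => |deriv φ ‖x‖|) μ := by
    refine ((hφ.continuous_deriv le_rfl).comp continuous_norm).abs.integrable_of_hasCompactSupport
      (HasCompactSupport.intro (isCompact_closedBall 0 a) fun x hx => ?_)
    rw [mem_closedBall_zero_iff, not_le] at hx
    simp [deriv_eq_zero_of_eqOn_Ici hconst hx]
  calc ∫ x, ‖fderiv ℝ (fun y : E => φ ‖y‖) x‖ ∂μ
      ≤ ∫ x, |deriv φ ‖x‖| ∂μ :=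
        integral_mono_of_nonneg (ae_of_all _ fun _ => norm_nonneg _) hint
          (ae_of_all _ (norm_fderiv_comp_norm_le (hφ.differentiable one_ne_zero)))
    _ = finrank ℝ E * μ.real (ball 0 1) * ∫ r in Ioi 0, r ^ (finrank ℝ E - 1) * |deriv φ r| := by
        rw [integral_fun_norm_addHaar μ fun r => |deriv φ r|, nsmul_eq_mul, smul_eq_mul,
          mul_assoc]
        rfl
    _ ≤ _ := by
        rw [mul_assoc _ (a ^ _)]
        gcongr
        exact integral_Ioi_pow_mul_abs_deriv_le hφ hanti ha hconst _

end HaarMeasure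

noncomputable def radialCutoff (a r : ℝ) : ℝ := smoothTransition ((a - r) / (a - 1))

section RadialCutoff

variable {a : ℝ}

theorem contDiff_radialCutoff {n : ℕ∞} : ContDiff ℝ n (radialCutoff a) :=
  smoothTransition.contDiff.comp ((contDiff_const.sub contDiff_id).div_const _)

theorem antitone_radialCutoff (ha : 1 < a) : Antitone (radialCutoff a) := fun r s hrs =>
  smoothTransition.monotone (div_le_div_of_nonneg_right (by linarith) (by linarith))

theorem radialCutoff_of_le_one (ha : 1 < a) {r : ℝ} (hr : r ≤ 1) : radialCutoff a r = 1 :=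
  smoothTransition.one_of_one_le ((one_le_div (by linarith)).2 (by linarith))

theorem radialCutoff_of_le (ha : 1 < a) {r : ℝ} (hr : a ≤ r) : radialCutoff a r = 0 :=
  smoothTransition.zero_of_nonpos (div_nonpos_of_nonpos_of_nonneg (by linarith) (by linarith))

variable {E : Type*} [NormedAddCommGroup E]

theorem hasCompactSupport_radialCutoff_norm [ProperSpace E] (ha : 1 < a) :
    HasCompactSupport fun x : E => radialCutoff a ‖x‖ :=
  HasCompactSupport.intro (isCompact_closedBall 0 a) fun x hx =>
    radialCutoff_of_le ha (le_of_lt (by simpa using hx))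

variable [InnerProductSpace ℝ E]

theorem contDiff_radialCutoff_norm (ha : 1 < a) {n : ℕ∞} :
    ContDiff ℝ n fun x : E => radialCutoff a ‖x‖ := by
  refine contDiff_comp_norm contDiff_radialCutoff ?_
  filter_upwards [Iio_mem_nhds one_pos] with r hr
  rw [radialCutoff_of_le_one ha hr.le, radialCutoff_of_le_one ha zero_le_one]

variable [FiniteDimensional ℝ E] [MeasurableSpace E] [BorelSpace E] (μ : Measure E)
  [μ.IsAddHaarMeasure]

theorem measureReal_ball_le_integral_rpow_radialCutoff_norm (ha : 1 < a) {p : ℝ} (hp : 0 < p) :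
    μ.real (ball 0 1) ≤ ∫ x, |radialCutoff a ‖x‖| ^ p ∂μ := by
  have hint : Integrable (fun x : E => |radialCutoff a ‖x‖| ^ p) μ :=
    ((contDiff_radialCutoff_norm (n := 0) ha).continuous.abs.rpow_const fun _ => Or.inr hp.le)
      |>.integrable_of_hasCompactSupport
        ((hasCompactSupport_radialCutoff_norm ha).comp_left (g := fun t => |t| ^ p)
          (by simp [zero_rpow hp.ne']))
  rw [← integral_indicator_one measurableSet_ball]
  refine integral_mono ((integrableOn_const measure_ball_lt_top.ne).integrable_indicator
    measurableSet_ball) hint fun x => ?_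
  by_cases hx : x ∈ ball (0 : E) 1
  · rw [indicator_of_mem hx, Pi.one_apply,
      radialCutoff_of_le_one ha (mem_ball_zero_iff.1 hx).le, abs_one, one_rpow]
  · rw [indicator_of_notMem hx]
    positivity

theorem integral_norm_fderiv_radialCutoff_norm_le [Nontrivial E] (ha : 1 < a) :
    ∫ x, ‖fderiv ℝ (fun y : E => radialCutoff a ‖y‖) x‖ ∂μ ≤
      finrank ℝ E * μ.real (ball 0 1) * a ^ (finrank ℝ E - 1) := by
  have hzero : ∀ r, a ≤ r → radialCutoff a r = radialCutoff a a := fun r hr => by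
    rw [radialCutoff_of_le ha hr, radialCutoff_of_le ha le_rfl]
  have h := integral_norm_fderiv_comp_norm_le μ contDiff_radialCutoff (antitone_radialCutoff ha)
    (by linarith) hzero
  rwa [radialCutoff_of_le_one ha zero_le_one, radialCutoff_of_le ha le_rfl, sub_zero,
    mul_one] at h

end RadialCutoff

theorem measureReal_ball_eq_ballVol {n : ℕ} (hn : 0 < n) :
    volume.real (ball (0 : EuclideanSpace ℝ (Fin n)) 1) = ballVol n := by
  have : Nonempty (Fin n) := Fin.pos_iff_nonempty.1 hn
  rw [measureReal_def, EuclideanSpace.volume_ball, Fintype.card_fin, ENNReal.ofReal_one, one_pow,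
    one_mul, ENNReal.toReal_ofReal (by positivity), ballVol, sqrt_eq_rpow, ← rpow_natCast,
    ← rpow_mul pi_pos.le]
  congr 2
  ring

/-- Sharpness of the constant in the `L^1`-Sobolev inequality in `ℝ^n`. -/
theorem sharp_L1_sobolev_euclidean_sharpness (n : ℕ) (hn : 2 ≤ n) (C : ℝ) (hC : 0 < C)
    (hineq : ∀ f : EuclideanSpace ℝ (Fin n) → ℝ, ContDiff ℝ (⊤ : ℕ∞) f → HasCompactSupport f →
      (∫ x : EuclideanSpace ℝ (Fin n), |f x| ^ ((n : ℝ) / ((n : ℝ) - 1))) ^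
          (((n : ℝ) - 1) / n) ≤
        C * ∫ x : EuclideanSpace ℝ (Fin n), ‖fderiv ℝ f x‖) :
    (n : ℝ)⁻¹ * ballVol n ^ (-(1 : ℝ) / n) ≤ C := by
  have : Nontrivial (EuclideanSpace ℝ (Fin n)) :=
    Module.nontrivial_of_finrank_pos (R := ℝ) (by rw [finrank_euclideanSpace_fin]; omega)
  have hn1 : (1 : ℝ) < n := by exact_mod_cast hn
  set ω := volume.real (ball (0 : EuclideanSpace ℝ (Fin n)) 1)
  have hω : 0 < ω := ENNReal.toReal_pos (measure_ball_pos _ _ one_pos).ne' measure_ball_lt_top.ne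
  have key : ∀ a, 1 < a → ω ^ (((n : ℝ) - 1) / n) ≤ C * (n * ω * a ^ (n - 1)) := fun a ha =>
    calc ω ^ (((n : ℝ) - 1) / n)
        ≤ (∫ x : EuclideanSpace ℝ (Fin n), |radialCutoff a ‖x‖| ^ ((n : ℝ) / ((n : ℝ) - 1))) ^
            (((n : ℝ) - 1) / n) :=
          rpow_le_rpow hω.le (measureReal_ball_le_integral_rpow_radialCutoff_norm _ ha
            (div_pos (by linarith) (by linarith))) (div_nonneg (by linarith) (by linarith))
      _ ≤ C * ∫ x : EuclideanSpace ℝ (Fin n), ‖fderiv ℝ (fun y => radialCutoff a ‖y‖) x‖ :=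
          hineq _ (contDiff_radialCutoff_norm ha) (hasCompactSupport_radialCutoff_norm ha)
      _ ≤ C * (n * ω * a ^ (n - 1)) := by
          gcongr
          simpa using integral_norm_fderiv_radialCutoff_norm_le
            (E := EuclideanSpace ℝ (Fin n)) volume ha
  have hlim : ω ^ (((n : ℝ) - 1) / n) ≤ C * (n * ω) := by
    have hcont : Continuous fun a : ℝ => C * (n * ω * a ^ (n - 1)) := by fun_prop
    refine ge_of_tendsto (x := 𝓝[>] 1) ?_ (eventually_nhdsWithin_of_forall key)
    simpa using (hcont.tendsto 1).mono_left nhdsWithin_le_nhds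
  rw [← measureReal_ball_eq_ballVol (by omega : 0 < n), inv_mul_le_iff₀ (by positivity),
    show -(1 : ℝ) / n = ((n : ℝ) - 1) / n - 1 by field_simp; ring, rpow_sub hω, rpow_one,
    div_le_iff₀ hω]
  linarith
end

section
/- Let n ≥ 2 be an integer, p ∈ (1,n), p' = p/(p-1), and s > n/p'. Let ν be a Borel measure on [0,∞) such that the function ρ ↦ ν([0,ρ])/ρ^n is nonincreasing on (0,∞) and bounded above by ω_n, and let θ = lim_{ρ→∞} ν([0,ρ])/ρ^n. Then lim_{λ→∞} λ^{s - n/p'} ∫_{[0,∞)} (λ + ρ^{p'})^{-s} dν(ρ) = θ · Γ(n/p' + 1) Γ(s - n/p') / Γ(s). -/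
/-!
With `a = p / (p - 1)`, writing `(λ + ρ^a)^(-s) = ∫_{ρ^a}^∞ s (λ + u)^(-s-1) du` and
exchanging the integrals turns the `ν`-integral into `∫_0^∞ s (λ + u)^(-s-1) ν[0, u^(1/a)] du`.
After the substitution `u = λ v`, `λ^(s - n/a)` times it becomes
`∫_0^∞ s v^q (1 + v)^(-s-1) H(λ v) dv` with `q = n/a`, where `H(x) = ν[0, x^(1/a)] / x^q` is the
Bishop–Gromov ratio at radius `x^(1/a)`. That ratio is bounded by `ω_n` and tends to `θ`, so
dominated convergence gives `θ` times a Beta integral of the second kind,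
`s B(q + 1, s - q) = Γ(q + 1) Γ(s - q) / Γ(s)`.
-/

open Real MeasureTheory Filter Topology Set
open scoped ENNReal

theorem intervalIntegral_rpow_mul_one_sub_rpow {a b : ℝ} (ha : 0 < a) (hb : 0 < b) :
    ∫ x in (0:ℝ)..1, x ^ (a - 1) * (1 - x) ^ (b - 1) = Gamma a * Gamma b / Gamma (a + b) := by
  have hβ := Complex.betaIntegral_eq_Gamma_mul_div a b (by simpa) (by simpa)
  rw [← Complex.ofReal_add, Complex.Gamma_ofReal, Complex.Gamma_ofReal, Complex.Gamma_ofReal,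
    Complex.betaIntegral] at hβ
  rw [← Complex.ofReal_inj, ← intervalIntegral.integral_ofReal]
  push_cast
  rw [← hβ]
  refine intervalIntegral.integral_congr fun x hx => ?_
  rw [uIcc_of_le zero_le_one] at hx
  simp only [Complex.ofReal_cpow hx.1, Complex.ofReal_cpow (sub_nonneg.2 hx.2)]
  push_cast
  rfl

theorem hasDerivWithinAt_div_one_sub {x : ℝ} (hx : x ≠ 1) (t : Set ℝ) :
    HasDerivWithinAt (fun x : ℝ => x / (1 - x)) ((1 - x) ^ 2)⁻¹ t x := by
  have h := (hasDerivAt_id x).div ((hasDerivAt_id x).const_sub 1) (sub_ne_zero.2 hx.symm)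
  refine h.hasDerivWithinAt.congr_deriv ?_
  simp only [id]
  ring

theorem image_div_one_sub_Ioo : (fun x : ℝ => x / (1 - x)) '' Ioo 0 1 = Ioi 0 := by
  ext v
  constructor
  · rintro ⟨x, hx, rfl⟩
    exact div_pos hx.1 (sub_pos.2 hx.2)
  · intro (hv : 0 < v)
    refine ⟨v / (1 + v), ⟨by positivity, (div_lt_one (by positivity)).2 (by linarith)⟩, ?_⟩
    field_simp
    ring

theorem injOn_div_one_sub : InjOn (fun x : ℝ => x / (1 - x)) (Ioo 0 1) := by
  intro x hx y hy hxy
  have h1 : 1 - x ≠ 0 := (sub_pos.2 hx.2).ne'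
  have h2 : 1 - y ≠ 0 := (sub_pos.2 hy.2).ne'
  field_simp at hxy
  linarith

/-- The Beta integral of the second kind, via the substitution `v = x / (1 - x)`. -/
theorem integral_Ioi_rpow_mul_one_add_rpow {a b : ℝ} (ha : 0 < a) (hb : 0 < b) :
    ∫ v in Ioi (0:ℝ), v ^ (a - 1) * (1 + v) ^ (-(a + b)) =
      Gamma a * Gamma b / Gamma (a + b) := by
  rw [← image_div_one_sub_Ioo, integral_image_eq_integral_abs_deriv_smul measurableSet_Ioo
    (fun x hx => hasDerivWithinAt_div_one_sub hx.2.ne _) injOn_div_one_sub,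
    ← intervalIntegral_rpow_mul_one_sub_rpow ha hb,
    intervalIntegral.integral_of_le zero_le_one, integral_Ioc_eq_integral_Ioo]
  refine setIntegral_congr_fun measurableSet_Ioo fun x ⟨hx0, hx1⟩ => ?_
  have hy : 0 < 1 - x := sub_pos.2 hx1
  have h1 : 1 + x / (1 - x) = (1 - x)⁻¹ := by field_simp; ring
  rw [h1, smul_eq_mul, abs_of_pos (by positivity), div_rpow hx0.le hy.le, inv_rpow hy.le,
    ← rpow_neg hy.le, ← rpow_natCast, ← rpow_neg hy.le, div_eq_mul_inv, ← rpow_neg hy.le]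
  calc _ = x ^ (a - 1) *
        ((1 - x) ^ (-((2 : ℕ) : ℝ)) * (1 - x) ^ (-(a - 1)) * (1 - x) ^ (- -(a + b))) := by
        ring
    _ = _ := by
        rw [← rpow_add hy, ← rpow_add hy]
        congr 2
        push_cast
        ring

theorem integrableOn_Ioi_rpow_mul_one_add_rpow {a b : ℝ} (ha : 0 < a) (hb : 0 < b) :
    IntegrableOn (fun v : ℝ => v ^ (a - 1) * (1 + v) ^ (-(a + b))) (Ioi 0) :=
  -- a non-integrable function has integral `0`, while the Beta value is positive
  Integrable.of_integral_ne_zero <| by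
    rw [integral_Ioi_rpow_mul_one_add_rpow ha hb]
    exact (ProbabilityTheory.beta_pos ha hb).ne'

theorem lintegral_setLIntegral_Ici_eq_lintegral_mul_measure_le {α : Type*} [MeasurableSpace α]
    (μ : Measure α) [SFinite μ] {f : α → ℝ} (hf : Measurable f) {k : ℝ → ℝ≥0∞}
    (hk : Measurable k) :
    ∫⁻ x, (∫⁻ u in Ici (f x), k u) ∂μ = ∫⁻ u, k u * μ {x | f x ≤ u} := by
  set S : Set (α × ℝ) := {z | f z.1 ≤ z.2}
  have hS : MeasurableSet S := measurableSet_le (hf.comp measurable_fst) measurable_snd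
  calc ∫⁻ x, (∫⁻ u in Ici (f x), k u) ∂μ
      = ∫⁻ x, (∫⁻ u, S.indicator (fun z => k z.2) (x, u)) ∂μ := by
        refine lintegral_congr fun x => ?_
        rw [← lintegral_indicator measurableSet_Ici]
        rfl
    _ = ∫⁻ u, ∫⁻ x, S.indicator (fun z => k z.2) (x, u) ∂μ :=
        lintegral_lintegral_swap ((hk.comp measurable_snd).indicator hS).aemeasurable
    _ = ∫⁻ u, k u * μ {x | f x ≤ u} := by
        refine lintegral_congr fun u => ?_
        rw [← lintegral_indicator_const (measurableSet_le hf measurable_const)]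
        rfl

theorem ofReal_rpow_neg_eq_setLIntegral_Ici {lam s x : ℝ} (hs : 0 < s) (hx : 0 < lam + x) :
    ENNReal.ofReal ((lam + x) ^ (-s)) =
      ∫⁻ u in Ici x, ENNReal.ofReal (s * (lam + u) ^ (-s - 1)) := by
  have hderiv :
      ∀ u ∈ Ici x, HasDerivAt (fun u => -(lam + u) ^ (-s)) (s * (lam + u) ^ (-s - 1)) u :=
    fun u (hu : x ≤ u) => by
      have h := (((hasDerivAt_id u).const_add lam).rpow_const (p := -s) (Or.inl (by
        simp only [id]; linarith))).neg
      exact h.congr_deriv (by simp only [id]; ring)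
  have hnonneg : ∀ u ∈ Ioi x, 0 ≤ s * (lam + u) ^ (-s - 1) :=
    fun u (hu : x < u) => mul_nonneg hs.le (rpow_nonneg (by linarith) _)
  have hlim : Tendsto (fun u => -(lam + u) ^ (-s)) atTop (𝓝 0) := by
    simpa using
      ((tendsto_rpow_neg_atTop hs).comp (tendsto_atTop_add_const_left _ lam tendsto_id)).neg
  rw [← setLIntegral_congr Ioi_ae_eq_Ici, ← ofReal_integral_eq_lintegral_ofReal
    (integrableOn_Ioi_deriv_of_nonneg' hderiv hnonneg hlim)
    (ae_restrict_of_forall_mem measurableSet_Ioi hnonneg),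
    integral_Ioi_of_hasDerivAt_of_nonneg' hderiv hnonneg hlim, zero_sub, neg_neg]

theorem measure_rpow_le_eq_zero {ν : Measure ℝ} (hν : ν (Iio 0) = 0) {a u : ℝ} (hu : u < 0) :
    ν {ρ | ρ ^ a ≤ u} = 0 := by
  refine measure_mono_null (fun ρ (hρ : ρ ^ a ≤ u) => show ρ < 0 from ?_) hν
  by_contra! h
  linarith [rpow_nonneg h a]

theorem measure_rpow_le_eq_measure_Icc {ν : Measure ℝ} (hν : ν (Iio 0) = 0) {a u : ℝ}
    (ha : 0 < a) (hu : 0 ≤ u) : ν {ρ | ρ ^ a ≤ u} = ν (Icc 0 (u ^ a⁻¹)) := by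
  rw [← measure_inter_conull (t := Ici 0) (by rwa [compl_Ici])]
  congr 1
  ext ρ
  simp only [mem_inter_iff, mem_ofPred_eq, mem_Ici, mem_Icc]
  constructor
  · exact fun ⟨hρa, hρ⟩ => ⟨hρ, (le_rpow_inv_iff_of_pos hρ hu ha).2 hρa⟩
  · exact fun ⟨hρ, hρa⟩ => ⟨(le_rpow_inv_iff_of_pos hρ hu ha).1 hρa, hρ⟩

theorem measurable_measure_Icc (ν : Measure ℝ) (c : ℝ) : Measurable fun r => ν (Icc c r) :=
  Monotone.measurable fun _ _ h => measure_mono (Icc_subset_Icc_right h)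

theorem integral_rpow_add_rpow_neg_eq_integral_Ioi {ν : Measure ℝ} [IsFiniteMeasureOnCompacts ν]
    (hν : ν (Iio 0) = 0) {a s lam : ℝ} (ha : 0 < a) (hs : 0 < s) (hlam : 0 < lam) :
    ∫ ρ, (lam + ρ ^ a) ^ (-s) ∂ν =
      ∫ u in Ioi 0, s * (lam + u) ^ (-s - 1) * (ν (Icc 0 (u ^ a⁻¹))).toReal := by
  have hae : ∀ᵐ ρ ∂ν, 0 ≤ ρ :=
    measure_mono_null (fun ρ (hρ : ¬0 ≤ ρ) => show ρ < 0 from not_le.1 hρ) hν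
  set k : ℝ → ℝ≥0∞ := fun u => ENNReal.ofReal (s * (lam + u) ^ (-s - 1))
  have hk_support : (fun u => k u * ν {ρ | ρ ^ a ≤ u}).support ⊆ Ici 0 := fun u hu => by
    by_contra h
    exact hu (by simp only [measure_rpow_le_eq_zero hν (not_le.1 h), mul_zero])
  have hrhs : ∀ u ∈ Ioi (0 : ℝ), k u * ν {ρ | ρ ^ a ≤ u} =
      ENNReal.ofReal (s * (lam + u) ^ (-s - 1) * (ν (Icc 0 (u ^ a⁻¹))).toReal) := fun u hu => by
    have : 0 ≤ s * (lam + u) ^ (-s - 1) := mul_nonneg hs.le (rpow_nonneg (by linarith [hu.out]) _)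
    rw [ENNReal.ofReal_mul this, ENNReal.ofReal_toReal measure_Icc_lt_top.ne,
      measure_rpow_le_eq_measure_Icc hν ha hu.out.le]
  calc ∫ ρ, (lam + ρ ^ a) ^ (-s) ∂ν
      = (∫⁻ ρ, ENNReal.ofReal ((lam + ρ ^ a) ^ (-s)) ∂ν).toReal :=
        integral_eq_lintegral_of_nonneg_ae
          (hae.mono fun ρ hρ => rpow_nonneg (by positivity) _)
          (Measurable.aestronglyMeasurable (by fun_prop))
    _ = (∫⁻ ρ, (∫⁻ u in Ici (ρ ^ a), k u) ∂ν).toReal := by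
        congr 1
        exact lintegral_congr_ae (hae.mono fun ρ hρ =>
          ofReal_rpow_neg_eq_setLIntegral_Ici hs (by positivity))
    _ = (∫⁻ u in Ioi 0, k u * ν {ρ | ρ ^ a ≤ u}).toReal := by
        rw [lintegral_setLIntegral_Ici_eq_lintegral_mul_measure_le ν (by fun_prop) (by fun_prop),
          setLIntegral_congr Ioi_ae_eq_Ici, setLIntegral_eq_of_support_subset hk_support]
    _ = ∫ u in Ioi 0, s * (lam + u) ^ (-s - 1) * (ν (Icc 0 (u ^ a⁻¹))).toReal := by
        rw [setLIntegral_congr_fun measurableSet_Ioi hrhs, integral_eq_lintegral_of_nonneg_ae]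
        · exact ae_restrict_of_forall_mem measurableSet_Ioi fun u (hu : 0 < u) =>
            mul_nonneg (mul_nonneg hs.le (rpow_nonneg (by linarith) _)) ENNReal.toReal_nonneg
        · have hF := (measurable_measure_Icc ν 0).ennreal_toReal
          exact ((by fun_prop : Measurable fun u : ℝ => s * (lam + u) ^ (-s - 1)).mul
            (hF.comp (by fun_prop))).aestronglyMeasurable

theorem rpow_mul_integral_Ioi_eq_integral_Ioi_comp_mul_left {M : ℝ → ℝ} {q s lam : ℝ}
    (hlam : 0 < lam) :
    lam ^ (s - q) * ∫ u in Ioi 0, s * (lam + u) ^ (-s - 1) * M u =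
      ∫ v in Ioi 0, s * (v ^ q * (1 + v) ^ (-s - 1)) * (M (lam * v) / (lam * v) ^ q) := by
  have hscale := integral_comp_mul_left_Ioi (fun u => s * (lam + u) ^ (-s - 1) * M u) 0 hlam
  rw [mul_zero, smul_eq_mul, eq_inv_mul_iff_mul_eq₀ hlam.ne'] at hscale
  have hpow : lam ^ (s - q) * lam * lam ^ (-s - 1) = (lam ^ q)⁻¹ := by
    rw [← rpow_neg hlam.le, ← rpow_add_one hlam.ne', ← rpow_add hlam]
    ring_nf
  rw [← hscale, ← mul_assoc, ← integral_const_mul]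
  refine setIntegral_congr_fun measurableSet_Ioi fun v (hv : 0 < v) => ?_
  rw [show lam + lam * v = lam * (1 + v) by ring, mul_rpow hlam.le (by positivity),
    mul_rpow hlam.le hv.le]
  have : v ^ q ≠ 0 := (rpow_pos_of_pos hv q).ne'
  calc _ = (lam ^ (s - q) * lam * lam ^ (-s - 1)) * (s * (1 + v) ^ (-s - 1) * M (lam * v)) := by
        ring
    _ = _ := by
        rw [hpow]
        field_simp

theorem tendsto_integral_Ioi_mul_comp_mul_left {w H : ℝ → ℝ} {C θ : ℝ}
    (hw : IntegrableOn w (Ioi 0)) (hH : Measurable H) (hHC : ∀ x, 0 < x → ‖H x‖ ≤ C)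
    (hHθ : Tendsto H atTop (𝓝 θ)) :
    Tendsto (fun lam => ∫ v in Ioi 0, w v * H (lam * v)) atTop
      (𝓝 ((∫ v in Ioi 0, w v) * θ)) := by
  rw [← integral_mul_const]
  refine tendsto_integral_filter_of_dominated_convergence (fun v => ‖w v‖ * C)
    (Eventually.of_forall fun lam => hw.aestronglyMeasurable.mul
      (hH.comp (measurable_const_mul lam)).aestronglyMeasurable) ?_ (hw.norm.mul_const C) ?_
  · filter_upwards [eventually_gt_atTop 0] with lam hlam
    filter_upwards [ae_restrict_mem measurableSet_Ioi] with v (hv : 0 < v)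
    rw [norm_mul]
    exact mul_le_mul_of_nonneg_left (hHC _ (mul_pos hlam hv)) (norm_nonneg _)
  · filter_upwards [ae_restrict_mem measurableSet_Ioi] with v (hv : 0 < v)
    exact (hHθ.comp (tendsto_id.atTop_mul_const hv)).const_mul (w v)

theorem isFiniteMeasureOnCompacts_of_measure_Icc {ν : Measure ℝ} (hν : ν (Iio 0) = 0)
    (hfin : ∀ r, ν (Icc 0 r) ≠ ∞) : IsFiniteMeasureOnCompacts ν := by
  refine ⟨fun K hK => ?_⟩
  obtain ⟨r, hr⟩ := hK.isBounded.subset_closedBall 0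
  calc ν K ≤ ν (Iio 0 ∪ Icc 0 r) := measure_mono fun x hx => by
        have hxr : x ≤ r := (le_abs_self x).trans (mem_closedBall_zero_iff.1 (hr hx))
        rcases lt_or_ge x 0 with h | h
        exacts [Or.inl h, Or.inr ⟨h, hxr⟩]
    _ ≤ ν (Iio 0) + ν (Icc 0 r) := measure_union_le _ _
    _ < ∞ := by rw [hν, zero_add]; exact (hfin r).lt_top

theorem ballVol_pos (n : ℕ) : 0 < ballVol n :=
  div_pos (rpow_pos_of_pos pi_pos _) (Gamma_pos_of_pos (by positivity))

theorem tendsto_rpow_mul_integral_rpow_add_rpow_neg {ν : Measure ℝ} [IsFiniteMeasureOnCompacts ν]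
    (hν : ν (Iio 0) = 0) {a q s C θ : ℝ} (ha : 0 < a) (hq : 0 ≤ q) (hqs : q < s)
    (hC : ∀ x, 0 < x → (ν (Icc 0 (x ^ a⁻¹))).toReal / x ^ q ≤ C)
    (hθ : Tendsto (fun x => (ν (Icc 0 (x ^ a⁻¹))).toReal / x ^ q) atTop (𝓝 θ)) :
    Tendsto (fun lam => lam ^ (s - q) * ∫ ρ, (lam + ρ ^ a) ^ (-s) ∂ν) atTop
      (𝓝 (θ * (Gamma (q + 1) * Gamma (s - q) / Gamma s))) := by
  have hs : 0 < s := hq.trans_lt hqs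
  have hq1 : 0 < q + 1 := by linarith
  have hsq : 0 < s - q := by linarith
  have hβ := integral_Ioi_rpow_mul_one_add_rpow hq1 hsq
  have hβint := integrableOn_Ioi_rpow_mul_one_add_rpow hq1 hsq
  rw [add_sub_cancel_right, show -(q + 1 + (s - q)) = -s - 1 by ring] at hβ hβint
  rw [show q + 1 + (s - q) = s + 1 by ring, Gamma_add_one hs.ne'] at hβ
  have hw : ∫ v in Ioi 0, s * (v ^ q * (1 + v) ^ (-s - 1)) =
      Gamma (q + 1) * Gamma (s - q) / Gamma s := by
    rw [integral_const_mul, hβ]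
    field_simp
  have hmeas : Measurable fun x : ℝ => (ν (Icc 0 (x ^ a⁻¹))).toReal / x ^ q :=
    ((measurable_measure_Icc ν 0).ennreal_toReal.comp (by fun_prop)).div (by fun_prop)
  rw [mul_comm θ, ← hw]
  refine (tendsto_integral_Ioi_mul_comp_mul_left (hβint.const_mul s) hmeas (fun x hx =>
    (norm_of_nonneg (div_nonneg ENNReal.toReal_nonneg (rpow_nonneg hx.le q))).trans_le (hC x hx))
    hθ).congr' ?_
  filter_upwards [eventually_gt_atTop 0] with lam hlam
  rw [integral_rpow_add_rpow_neg_eq_integral_Ioi hν ha hs hlam,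
    rpow_mul_integral_Ioi_eq_integral_Ioi_comp_mul_left hlam]

theorem talenti_bubble_integral_asymptotics_general (n : ℕ) (p : ℝ) (hp : 1 < p)
    (s : ℝ) (hs : (n : ℝ) / (p / (p - 1)) < s)
    (ν : Measure ℝ) (hνneg : ν (Set.Iio 0) = 0)
    (hbound : ∀ ρ : ℝ, 0 < ρ → ν (Set.Icc 0 ρ) ≤ ENNReal.ofReal (ballVol n * ρ ^ n))
    (θ : ℝ)
    (hθ : Tendsto (fun ρ : ℝ => (ν (Set.Icc 0 ρ)).toReal / ρ ^ n) atTop (nhds θ)) :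
    Tendsto
      (fun lam : ℝ =>
        lam ^ (s - (n : ℝ) / (p / (p - 1))) * ∫ ρ, (lam + ρ ^ (p / (p - 1))) ^ (-s) ∂ν)
      atTop
      (nhds (θ * (Real.Gamma ((n : ℝ) / (p / (p - 1)) + 1) *
        Real.Gamma (s - (n : ℝ) / (p / (p - 1))) / Real.Gamma s))) := by
  set a := p / (p - 1)
  have ha : 0 < a := div_pos (by linarith) (by linarith)
  have hfin : ∀ r, ν (Icc 0 r) ≠ ∞ := fun r => ne_top_of_le_ne_top ENNReal.ofReal_ne_top
    ((measure_mono (Icc_subset_Icc_right (le_max_left r 1))).trans (hbound _ (by positivity)))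
  have := isFiniteMeasureOnCompacts_of_measure_Icc hνneg hfin
  have hratio : ∀ x : ℝ, 0 < x → (ν (Icc 0 (x ^ a⁻¹))).toReal / x ^ ((n : ℝ) / a) =
      (ν (Icc 0 (x ^ a⁻¹))).toReal / (x ^ a⁻¹) ^ n := fun x hx => by
    rw [← rpow_natCast, ← rpow_mul hx.le, div_eq_inv_mul (n : ℝ)]
  refine tendsto_rpow_mul_integral_rpow_add_rpow_neg hνneg ha (by positivity) hs (C := ballVol n)
    (fun x hx => ?_) ((hθ.comp (tendsto_rpow_atTop (inv_pos.2 ha))).congr'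
      ((eventually_gt_atTop 0).mono fun x hx => (hratio x hx).symm))
  have hr : 0 < x ^ a⁻¹ := rpow_pos_of_pos hx _
  rw [hratio x hx, div_le_iff₀ (by positivity)]
  exact ENNReal.toReal_le_of_le_ofReal (mul_nonneg (ballVol_pos n).le (by positivity)) (hbound _ hr)

/-- Asymptotic behaviour of the Talentian-bubble integral (Proposition 2.3(ii)). -/
theorem talenti_bubble_integral_asymptotics (n : ℕ) (hn : 2 ≤ n) (p : ℝ) (hp : 1 < p)
    (hpn : p < n) (s : ℝ) (hs : (n : ℝ) / (p / (p - 1)) < s)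
    (ν : Measure ℝ) (hνneg : ν (Set.Iio 0) = 0)
    (hmono : AntitoneOn (fun ρ : ℝ => (ν (Set.Icc 0 ρ)).toReal / ρ ^ n) (Set.Ioi 0))
    (hbound : ∀ ρ : ℝ, 0 < ρ → ν (Set.Icc 0 ρ) ≤ ENNReal.ofReal (ballVol n * ρ ^ n))
    (θ : ℝ)
    (hθ : Tendsto (fun ρ : ℝ => (ν (Set.Icc 0 ρ)).toReal / ρ ^ n) atTop (nhds θ)) :
    Tendsto
      (fun lam : ℝ =>
        lam ^ (s - (n : ℝ) / (p / (p - 1))) * ∫ ρ, (lam + ρ ^ (p / (p - 1))) ^ (-s) ∂ν)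
      atTop
      (nhds (θ * (Real.Gamma ((n : ℝ) / (p / (p - 1)) + 1) *
        Real.Gamma (s - (n : ℝ) / (p / (p - 1))) / Real.Gamma s))) :=
  talenti_bubble_integral_asymptotics_general n p hp s hs ν hνneg hbound θ hθ
end

section
/- Let n ≥ 2 be an integer, p > 1, and p' = p/(p-1). Let ν be a Borel measure on [0,∞) such that the function ρ ↦ ν([0,ρ])/ρ^n is nonincreasing on (0,∞) and bounded above by ω_n, and let θ = lim_{ρ→∞} ν([0,ρ])/ρ^n. Then lim_{λ→0^+} λ^{n/p' + 1} ∫_{[0,∞)} ρ^{p'} e^{-λ ρ^{p'}} dν(ρ) = θ · (n/p') · Γ(n/p' + 1). -/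
/-!
Write `ρ^q e^{-λρ^q} = λ⁻¹ φ(λ^{1/q} ρ)` with `φ(x) = x^q e^{-x^q} = ∫_x^∞ ψ`, where `ψ = -φ'`.
Exchanging the integrals (Fubini) gives `∫ φ(ρ/b) dν(ρ) = ∫_0^∞ ν([0, b s]) ψ(s) ds`, so
`b^{-m} ∫ φ(ρ/b) dν(ρ)` is the integral of `(ν([0, b s]) / (b s)^m) · s^m ψ(s)`. The ratio is
bounded and tends to `θ` as `b = λ^{-1/q} → ∞`, so dominated convergence yields
`θ ∫_0^∞ s^m ψ(s) ds = θ (m/q) Γ(m/q + 1)`, the last step being two Gamma integrals.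
-/

open Real MeasureTheory Filter Topology

open Set

section Profile

variable {q : ℝ}

lemma hasDerivAt_rpow_mul_exp_neg_rpow {t : ℝ} (ht : 0 < t) :
    HasDerivAt (fun x : ℝ => x ^ q * exp (-x ^ q))
      (-(q * (t ^ (2 * q - 1) - t ^ (q - 1)) * exp (-t ^ q))) t := by
  have hpow : HasDerivAt (fun x : ℝ => x ^ q) (q * t ^ (q - 1)) t :=
    hasDerivAt_rpow_const (Or.inl ht.ne')
  have hexp : HasDerivAt (fun x : ℝ => exp (-x ^ q)) (exp (-t ^ q) * -(q * t ^ (q - 1))) t :=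
    hpow.neg.exp
  refine (hpow.mul hexp).congr_deriv ?_
  rw [show 2 * q - 1 = q + (q - 1) by ring, rpow_add ht]
  ring

lemma integrableOn_rpow_mul_neg_deriv_rpow_mul_exp_neg_rpow (hq : 0 < q) {r : ℝ} (hr : -q < r) :
    IntegrableOn (fun s : ℝ => s ^ r * (q * (s ^ (2 * q - 1) - s ^ (q - 1)) * exp (-s ^ q)))
      (Ioi 0) := by
  refine IntegrableOn.congr_fun (((integrableOn_rpow_mul_exp_neg_rpow (s := r + (2 * q - 1))
    (by linarith) hq).sub (integrableOn_rpow_mul_exp_neg_rpow (s := r + (q - 1))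
    (by linarith) hq)).const_mul q) (fun s (hs : 0 < s) => ?_) measurableSet_Ioi
  simp only [Pi.sub_apply, rpow_add hs]
  ring

lemma integral_Ioi_neg_deriv_rpow_mul_exp_neg_rpow (hq : 0 < q) {x : ℝ} (hx : 0 ≤ x) :
    ∫ s in Ioi x, q * (s ^ (2 * q - 1) - s ^ (q - 1)) * exp (-s ^ q) = x ^ q * exp (-x ^ q) := by
  have hcont : ContinuousAt (fun s : ℝ => s ^ q * exp (-s ^ q)) x := by
    have := continuousAt_rpow_const x q (Or.inr hq.le)
    exact this.mul this.neg.rexp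
  have hlim : Tendsto (fun s : ℝ => s ^ q * exp (-s ^ q)) atTop (𝓝 0) :=
    ((tendsto_pow_mul_exp_neg_atTop_nhds_zero 1).comp (tendsto_rpow_atTop hq)).congr
      fun s => by simp
  have hint : IntegrableOn (fun s : ℝ => q * (s ^ (2 * q - 1) - s ^ (q - 1)) * exp (-s ^ q))
      (Ioi x) := by
    refine ((integrableOn_rpow_mul_neg_deriv_rpow_mul_exp_neg_rpow hq (r := 0)
      (by linarith)).mono_set (Ioi_subset_Ioi hx)).congr_fun (fun s _ => ?_) measurableSet_Ioi
    simp
  have := integral_Ioi_of_hasDerivAt_of_tendsto hcont.neg.continuousWithinAt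
    (fun s hs => (hasDerivAt_rpow_mul_exp_neg_rpow (hx.trans_lt hs)).neg.congr_deriv (neg_neg _))
    hint hlim.neg
  simpa using this

lemma integral_rpow_mul_neg_deriv_rpow_mul_exp_neg_rpow (hq : 0 < q) {m : ℝ} (hm : -q < m) :
    ∫ s in Ioi 0, s ^ m * (q * (s ^ (2 * q - 1) - s ^ (q - 1)) * exp (-s ^ q))
      = m / q * Gamma (m / q + 1) := by
  have hsplit : ∀ s ∈ Ioi (0 : ℝ), s ^ m * (q * (s ^ (2 * q - 1) - s ^ (q - 1)) * exp (-s ^ q))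
      = q * (s ^ (m + (2 * q - 1)) * exp (-s ^ q)) - q * (s ^ (m + (q - 1)) * exp (-s ^ q)) :=
    fun s (hs : 0 < s) => by rw [rpow_add hs, rpow_add hs]; ring
  rw [setIntegral_congr_fun measurableSet_Ioi hsplit,
    integral_sub ((integrableOn_rpow_mul_exp_neg_rpow (by linarith) hq).const_mul q)
      ((integrableOn_rpow_mul_exp_neg_rpow (by linarith) hq).const_mul q),
    integral_const_mul, integral_const_mul, integral_rpow_mul_exp_neg_rpow hq (by linarith),
    integral_rpow_mul_exp_neg_rpow hq (by linarith),
    show (m + (2 * q - 1) + 1) / q = m / q + 1 + 1 by field_simp; ring,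
    show (m + (q - 1) + 1) / q = m / q + 1 by field_simp; ring,
    Gamma_add_one (by linarith [(lt_div_iff₀ hq).2 (by linarith : -1 * q < m)])]
  field_simp
  ring

end Profile

section LayerCake

variable {ν : Measure ℝ}

lemma measure_Iic_eq_measure_Icc_zero (hν : ν (Iio 0) = 0) (t : ℝ) :
    ν (Iic t) = ν (Icc 0 t) := by
  rw [← measure_sdiff_null (s := Iic t) hν]
  congr 1
  ext x
  simp [and_comm]

lemma ae_nonneg_of_measure_Iio_zero (hν : ν (Iio 0) = 0) : ∀ᵐ ρ ∂ν, 0 ≤ ρ :=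
  (measure_eq_zero_iff_ae_notMem.1 hν).mono fun _ h => not_lt.1 h

lemma integral_setIntegral_Ioi_div_eq [SFinite ν] (hν : ν (Iio 0) = 0)
    (hfin : ∀ t, ν (Icc 0 t) ≠ ⊤) {b : ℝ} (hb : 0 < b) {ψ : ℝ → ℝ} (hψ : Measurable ψ)
    (hint : IntegrableOn (fun s => (ν (Icc 0 (b * s))).toReal * ψ s) (Ioi 0)) :
    ∫ ρ, (∫ s in Ioi (ρ / b), ψ s) ∂ν = ∫ s in Ioi 0, (ν (Icc 0 (b * s))).toReal * ψ s := by
  set f : ℝ → ℝ → ℝ := fun ρ s => (Iic (b * s)).indicator (fun _ => ψ s) ρ with hf_def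
  have hf_inner (s : ℝ) : ∫ ρ, f ρ s ∂ν = (ν (Icc 0 (b * s))).toReal * ψ s := by
    rw [integral_indicator_const _ measurableSet_Iic, measureReal_def,
      measure_Iic_eq_measure_Icc_zero hν, smul_eq_mul]
  have hf_meas : Measurable (Function.uncurry f) :=
    (hψ.comp measurable_snd).indicator
      (measurableSet_le measurable_fst (measurable_snd.const_mul b))
  have hf_int : Integrable (Function.uncurry f) (ν.prod (volume.restrict (Ici 0))) := by
    refine (integrable_prod_iff' hf_meas.aestronglyMeasurable).2 ⟨ae_of_all _ fun s => ?_, ?_⟩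
    · change Integrable ((Iic (b * s)).indicator fun _ => ψ s) ν
      refine (integrableOn_const (C := ψ s) ?_).integrable_indicator measurableSet_Iic
      rw [measure_Iic_eq_measure_Icc_zero hν]
      exact hfin _
    · refine ((integrableOn_Ici_iff_integrableOn_Ioi).2 hint.norm).congr_fun (fun s _ => ?_)
        measurableSet_Ici
      simp only [Function.uncurry_apply_pair, hf_def, norm_indicator_eq_indicator_norm]
      rw [integral_indicator_const _ measurableSet_Iic, measureReal_def,
        measure_Iic_eq_measure_Icc_zero hν, smul_eq_mul, norm_mul,
        Real.norm_of_nonneg ENNReal.toReal_nonneg]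
  calc ∫ ρ, (∫ s in Ioi (ρ / b), ψ s) ∂ν = ∫ ρ, (∫ s in Ici 0, f ρ s) ∂ν := by
        refine integral_congr_ae ((ae_nonneg_of_measure_Iio_zero hν).mono fun ρ hρ => ?_)
        have hf_eq : f ρ = (Ici (ρ / b)).indicator ψ := by
          ext s
          simp [hf_def, indicator, div_le_iff₀' hb]
        dsimp only
        rw [hf_eq, setIntegral_indicator measurableSet_Ici,
          inter_eq_right.2 (Ici_subset_Ici.2 (div_nonneg hρ hb.le)), integral_Ici_eq_integral_Ioi]
    _ = ∫ s in Ici 0, ∫ ρ, f ρ s ∂ν := integral_integral_swap hf_int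
    _ = ∫ s in Ioi 0, (ν (Icc 0 (b * s))).toReal * ψ s := by
        simp_rw [hf_inner]
        exact integral_Ici_eq_integral_Ioi

theorem tendsto_rpow_neg_mul_integral_setIntegral_Ioi_div {m C θ : ℝ} (hν : ν (Iio 0) = 0)
    (hC : ∀ t, 0 < t → ν (Icc 0 t) ≤ ENNReal.ofReal (C * t ^ m))
    (hθ : Tendsto (fun t => (ν (Icc 0 t)).toReal / t ^ m) atTop (𝓝 θ))
    {ψ : ℝ → ℝ} (hψ : Measurable ψ) (hψint : IntegrableOn (fun s => s ^ m * ψ s) (Ioi 0)) :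
    Tendsto (fun b => b ^ (-m) * ∫ ρ, (∫ s in Ioi (ρ / b), ψ s) ∂ν) atTop
      (𝓝 (θ * ∫ s in Ioi 0, s ^ m * ψ s)) := by
  have hfin (t : ℝ) : ν (Icc 0 t) ≠ ⊤ :=
    ne_top_of_le_ne_top ENNReal.ofReal_ne_top
      ((measure_mono (Icc_subset_Icc_right (le_max_left t 1))).trans
        (hC _ (one_pos.trans_le (le_max_right t 1))))
  have : IsLocallyFiniteMeasure ν :=
    ⟨fun x => ⟨Iic (x + 1), Iic_mem_nhds (lt_add_one x), by
      rw [measure_Iic_eq_measure_Icc_zero hν]; exact (hfin _).lt_top⟩⟩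
  set R : ℝ → ℝ := fun t => (ν (Icc 0 t)).toReal / t ^ m with hR
  have hR_meas : Measurable R := by
    have : Monotone fun t => (ν (Icc 0 t)).toReal := fun s t hst =>
      ENNReal.toReal_mono (hfin t) (measure_mono (Icc_subset_Icc_right hst))
    exact this.measurable.div (measurable_id.pow_const m)
  have hR_bound (t : ℝ) (ht : 0 < t) : ‖R t‖ ≤ |C| := by
    have hpos := rpow_pos_of_pos ht m
    rw [Real.norm_of_nonneg (div_nonneg ENNReal.toReal_nonneg hpos.le), div_le_iff₀ hpos]
    calc _ ≤ |C * t ^ m| := ENNReal.toReal_le_of_le_ofReal (abs_nonneg _)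
          ((hC t ht).trans (ENNReal.ofReal_le_ofReal (le_abs_self _)))
      _ = |C| * t ^ m := by rw [abs_mul, abs_of_pos hpos]
  have hF_int (b : ℝ) (hb : 0 < b) :
      IntegrableOn (fun s => R (b * s) * (s ^ m * ψ s)) (Ioi 0) :=
    hψint.bdd_mul (hR_meas.comp (measurable_const_mul b)).aestronglyMeasurable
      ((ae_restrict_iff' measurableSet_Ioi).2 (ae_of_all _ fun s hs => hR_bound _ (mul_pos hb hs)))
  have hF_eq (b : ℝ) (hb : 0 < b) : ∀ s ∈ Ioi (0 : ℝ),
      b ^ m * (R (b * s) * (s ^ m * ψ s)) = (ν (Icc 0 (b * s))).toReal * ψ s := by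
    intro s (hs : 0 < s)
    have hbm := (rpow_pos_of_pos hb m).ne'
    have hsm := (rpow_pos_of_pos hs m).ne'
    simp only [hR, mul_rpow hb.le hs.le]
    field_simp
  have hkey (b : ℝ) (hb : 0 < b) : b ^ (-m) * ∫ ρ, (∫ s in Ioi (ρ / b), ψ s) ∂ν
      = ∫ s in Ioi 0, R (b * s) * (s ^ m * ψ s) := by
    rw [integral_setIntegral_Ioi_div_eq hν hfin hb hψ
        (IntegrableOn.congr_fun ((hF_int b hb).const_mul (b ^ m)) (hF_eq b hb) measurableSet_Ioi),
      ← setIntegral_congr_fun measurableSet_Ioi (hF_eq b hb), integral_const_mul, ← mul_assoc,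
      ← rpow_add hb, neg_add_cancel, rpow_zero, one_mul]
  have hlim : Tendsto (fun b => ∫ s in Ioi 0, R (b * s) * (s ^ m * ψ s)) atTop
      (𝓝 (∫ s in Ioi 0, θ * (s ^ m * ψ s))) := by
    refine tendsto_integral_filter_of_dominated_convergence (fun s => |C| * ‖s ^ m * ψ s‖) ?_ ?_
      (hψint.norm.const_mul _) ?_
    · filter_upwards [eventually_gt_atTop 0] with b hb
      exact (hF_int b hb).aestronglyMeasurable
    · filter_upwards [eventually_gt_atTop 0] with b hb
      refine (ae_restrict_iff' measurableSet_Ioi).2 (ae_of_all _ fun s hs => ?_)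
      rw [norm_mul]
      exact mul_le_mul_of_nonneg_right (hR_bound _ (mul_pos hb hs)) (norm_nonneg _)
    · exact (ae_restrict_iff' measurableSet_Ioi).2 (ae_of_all _ fun s hs =>
        (hθ.comp (tendsto_id.atTop_mul_const hs)).mul_const _)
  rw [← integral_const_mul]
  refine hlim.congr' ?_
  filter_upwards [eventually_gt_atTop 0] with b hb
  exact (hkey b hb).symm

end LayerCake

theorem tendsto_rpow_mul_integral_rpow_mul_exp_neg_mul_rpow {ν : Measure ℝ} {q m C θ : ℝ}
    (hq : 0 < q) (hm : -q < m) (hν : ν (Iio 0) = 0)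
    (hC : ∀ t, 0 < t → ν (Icc 0 t) ≤ ENNReal.ofReal (C * t ^ m))
    (hθ : Tendsto (fun t => (ν (Icc 0 t)).toReal / t ^ m) atTop (𝓝 θ)) :
    Tendsto (fun lam => lam ^ (m / q + 1) * ∫ ρ, ρ ^ q * exp (-(lam * ρ ^ q)) ∂ν) (𝓝[>] 0)
      (𝓝 (θ * (m / q) * Gamma (m / q + 1))) := by
  have hscaled := tendsto_rpow_neg_mul_integral_setIntegral_Ioi_div hν hC hθ
    (ψ := fun s => q * (s ^ (2 * q - 1) - s ^ (q - 1)) * exp (-s ^ q)) (by fun_prop)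
    (integrableOn_rpow_mul_neg_deriv_rpow_mul_exp_neg_rpow hq hm)
  rw [integral_rpow_mul_neg_deriv_rpow_mul_exp_neg_rpow hq hm, ← mul_assoc] at hscaled
  refine (hscaled.comp (tendsto_rpow_neg_nhdsGT_zero (neg_lt_zero.2 (inv_pos.2 hq)))).congr' ?_
  filter_upwards [self_mem_nhdsWithin] with lam (hlam : 0 < lam)
  have hb := rpow_pos_of_pos hlam (-q⁻¹)
  calc (lam ^ (-q⁻¹)) ^ (-m) * ∫ ρ, (∫ s in Ioi (ρ / lam ^ (-q⁻¹)),
          q * (s ^ (2 * q - 1) - s ^ (q - 1)) * exp (-s ^ q)) ∂ν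
      = lam ^ (m / q) * ∫ ρ, lam * (ρ ^ q * exp (-(lam * ρ ^ q))) ∂ν := by
        congr 1
        · rw [← rpow_mul hlam.le]; ring_nf
        · refine integral_congr_ae ((ae_nonneg_of_measure_Iio_zero hν).mono fun ρ hρ => ?_)
          have hscale : (ρ / lam ^ (-q⁻¹)) ^ q = lam * ρ ^ q := by
            rw [div_rpow hρ hb.le, ← rpow_mul hlam.le, neg_mul, inv_mul_cancel₀ hq.ne',
              rpow_neg_one, div_inv_eq_mul, mul_comm]
          dsimp only
          rw [integral_Ioi_neg_deriv_rpow_mul_exp_neg_rpow hq (div_nonneg hρ hb.le), hscale]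
          ring
    _ = lam ^ (m / q + 1) * ∫ ρ, ρ ^ q * exp (-(lam * ρ ^ q)) ∂ν := by
        rw [integral_const_mul, ← mul_assoc, ← rpow_add_one hlam.ne']

theorem gaussian_bubble_L2_asymptotics_general (n : ℕ) (p : ℝ) (hp : 1 < p)
    (ν : Measure ℝ) (hνneg : ν (Set.Iio 0) = 0)
    (hbound : ∀ ρ : ℝ, 0 < ρ → ν (Set.Icc 0 ρ) ≤ ENNReal.ofReal (ballVol n * ρ ^ n))
    (θ : ℝ)
    (hθ : Tendsto (fun ρ : ℝ => (ν (Set.Icc 0 ρ)).toReal / ρ ^ n) atTop (nhds θ)) :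
    Tendsto
      (fun lam : ℝ =>
        lam ^ ((n : ℝ) / (p / (p - 1)) + 1) *
          ∫ ρ, ρ ^ (p / (p - 1)) * Real.exp (-(lam * ρ ^ (p / (p - 1)))) ∂ν)
      (nhdsWithin 0 (Set.Ioi 0))
      (nhds (θ * ((n : ℝ) / (p / (p - 1))) * Real.Gamma ((n : ℝ) / (p / (p - 1)) + 1))) := by
  have hq : 0 < p / (p - 1) := div_pos (by linarith) (by linarith)
  exact tendsto_rpow_mul_integral_rpow_mul_exp_neg_mul_rpow hq
    ((neg_neg_of_pos hq).trans_le n.cast_nonneg) hνneg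
    (by simpa only [rpow_natCast] using hbound) (by simpa only [rpow_natCast] using hθ)

/-- Asymptotics of the Gaussian-bubble integral `L₂` as `λ → 0⁺`
(second formula of Proposition 2.4(ii)). -/
theorem gaussian_bubble_L2_asymptotics (n : ℕ) (hn : 2 ≤ n) (p : ℝ) (hp : 1 < p)
    (ν : Measure ℝ) (hνneg : ν (Set.Iio 0) = 0)
    (hmono : AntitoneOn (fun ρ : ℝ => (ν (Set.Icc 0 ρ)).toReal / ρ ^ n) (Set.Ioi 0))
    (hbound : ∀ ρ : ℝ, 0 < ρ → ν (Set.Icc 0 ρ) ≤ ENNReal.ofReal (ballVol n * ρ ^ n))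
    (θ : ℝ)
    (hθ : Tendsto (fun ρ : ℝ => (ν (Set.Icc 0 ρ)).toReal / ρ ^ n) atTop (nhds θ)) :
    Tendsto
      (fun lam : ℝ =>
        lam ^ ((n : ℝ) / (p / (p - 1)) + 1) *
          ∫ ρ, ρ ^ (p / (p - 1)) * Real.exp (-(lam * ρ ^ (p / (p - 1)))) ∂ν)
      (nhdsWithin 0 (Set.Ioi 0))
      (nhds (θ * ((n : ℝ) / (p / (p - 1))) * Real.Gamma ((n : ℝ) / (p / (p - 1)) + 1))) :=
  gaussian_bubble_L2_asymptotics_general n p hp ν hνneg hbound θ hθ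
end
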